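/- arXiv:1706.08277 — 3 statements merged into one kernel-verified Lean document; each statement's English description precedes it below -/
import Mathlib

section
/- Let H be a Hilbert space, (P_M)_{M∈ℳ} a nested family of closed subspaces indexed by a subset ℳ of ℕ (with P_M ⊆ P_{M'} when M ≤ M'), f* ∈ H with orthogonal projections f*^(M) onto P_M, and estimators f̂^(M) ∈ P_M for each M ∈ ℳ. Let σ : ℳ → ℝ≥0 be nondecreasing and suppose ‖f̂^(M) − f*^(M)‖ ≤ σ(M)/2 for all M ∈ ℳ. Define A(M) = sup_{M'∈ℳ} ( ‖f̂^(M')−f̂^(M∧M')‖ − σ(M') ) and let M̂ minimize A(M)+2σ(M) over ℳ. Then ‖f̂^(M̂) − f*‖ ≤ 4 inf_{M∈ℳ} ( ‖f*^(M) − f*‖ + σ(M) ). -/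
open scoped RealInnerProductSpace

/-!
Write `g M` for the projection of `f*` onto `P M` and `b M = ‖g M - f*‖` for the bias. For
`M ≤ M'` the nesting gives `g M' - g M = proj_{P M'} (f* - g M)`, so `‖g M' - g M‖ ≤ b M`, and
every term of `A M` is at most `b M`: the two estimation errors cost
`σ M / 2 + σ M' / 2 ≤ σ M'` by monotonicity of `σ`. For a fixed oracle `M`, go from `f̂ M̂` to
`f̂ (M ∧ M̂)` (paid by `A M + σ M̂`), then to `f̂ M` (paid by `A M̂ + σ M`), then to `g M` and `f*`;
minimality of `M̂` trades `A M̂ + σ M̂` for `A M + 2 σ M`, and `A M ≤ b M` finishes.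
-/

namespace Submodule

variable {E : Type*} [NormedAddCommGroup E] [InnerProductSpace ℝ E]

theorem norm_orthogonalProjectionOnto_sub_le_of_le {K₁ K₂ : Submodule ℝ E}
    [K₁.HasOrthogonalProjection] [K₂.HasOrthogonalProjection] (h : K₁ ≤ K₂) (f : E) :
    ‖(K₂.orthogonalProjectionOnto f : E) - K₁.orthogonalProjectionOnto f‖ ≤
      ‖f - K₁.orthogonalProjectionOnto f‖ := by
  have hfix : (K₂.orthogonalProjectionOnto (K₁.orthogonalProjectionOnto f : E) : E) =
      K₁.orthogonalProjectionOnto f :=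
    K₂.starProjection_eq_self_iff.2 (h (K₁.orthogonalProjectionOnto f).2)
  calc ‖(K₂.orthogonalProjectionOnto f : E) - K₁.orthogonalProjectionOnto f‖
      = ‖(K₂.orthogonalProjectionOnto (f - K₁.orthogonalProjectionOnto f) : E)‖ := by
        rw [map_sub, Submodule.coe_sub, hfix]
    _ ≤ _ := K₂.norm_orthogonalProjectionOnto_apply_le _

end Submodule

section GoldenshlugerLepski

variable {E : Type*} [SeminormedAddCommGroup E] (M' : Finset ℕ) (hM' : M'.Nonempty)
  (fhat : ℕ → E) (σ : ℕ → ℝ)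

noncomputable def glCriterion (m : ℕ) : ℝ :=
  M'.sup' hM' fun m' => ‖fhat m' - fhat (min m m')‖ - σ m'

variable {M' hM' fhat σ}

theorem norm_sub_min_le_glCriterion_add (m : ℕ) {m' : ℕ} (hm' : m' ∈ M') :
    ‖fhat m' - fhat (min m m')‖ ≤ glCriterion M' hM' fhat σ m + σ m' := by
  have := M'.le_sup' (fun m' => ‖fhat m' - fhat (min m m')‖ - σ m') hm'
  rw [glCriterion]
  linarith

variable {f : E} {g : ℕ → E}

theorem glCriterion_le_norm_sub
    (hσmono : ∀ m ∈ M', ∀ m' ∈ M', m ≤ m' → σ m ≤ σ m')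
    (hvar : ∀ m ∈ M', ‖fhat m - g m‖ ≤ σ m / 2)
    (hg : ∀ m ∈ M', ∀ m' ∈ M', m ≤ m' → ‖g m' - g m‖ ≤ ‖f - g m‖)
    {k : ℕ} (hk : k ∈ M') :
    glCriterion M' hM' fhat σ k ≤ ‖g k - f‖ := by
  refine M'.sup'_le _ _ fun m' hm' => ?_
  have hmin : min k m' ∈ M' := by rcases min_choice k m' with h | h <;> rw [h] <;> assumption
  have hbias : ‖g m' - g (min k m')‖ ≤ ‖g k - f‖ := by
    rcases le_total m' k with h | h
    · simp [min_eq_right h]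
    · simpa [min_eq_left h, norm_sub_rev f] using hg k hk m' hm' h
  have herr := hvar _ hmin
  rw [norm_sub_rev] at herr
  have hσ := hσmono _ hmin _ hm' (min_le_right k m')
  have htri := norm_sub_le_norm_sub_add_norm_sub (fhat m') (g (min k m')) (fhat (min k m'))
  have htri' := norm_sub_le_norm_sub_add_norm_sub (fhat m') (g m') (g (min k m'))
  linarith [hvar m' hm']

theorem norm_sub_le_of_glCriterion_minimizer
    (hvar : ∀ m ∈ M', ‖fhat m - g m‖ ≤ σ m / 2)
    (hA : ∀ m ∈ M', glCriterion M' hM' fhat σ m ≤ ‖g m - f‖)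
    {Mhat : ℕ} (hMhat : Mhat ∈ M')
    (hmin : ∀ m ∈ M', glCriterion M' hM' fhat σ Mhat + 2 * σ Mhat ≤
      glCriterion M' hM' fhat σ m + 2 * σ m)
    {m : ℕ} (hm : m ∈ M') :
    ‖fhat Mhat - f‖ ≤ 4 * (‖g m - f‖ + σ m) := by
  have hσ : ∀ k ∈ M', 0 ≤ σ k := fun k hk => by linarith [norm_nonneg (fhat k - g k), hvar k hk]
  have h₁ : ‖fhat Mhat - fhat (min m Mhat)‖ ≤ glCriterion M' hM' fhat σ m + σ Mhat :=
    norm_sub_min_le_glCriterion_add m hMhat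
  have h₂ : ‖fhat (min m Mhat) - fhat m‖ ≤ glCriterion M' hM' fhat σ Mhat + σ m := by
    rw [min_comm, norm_sub_rev]
    exact norm_sub_min_le_glCriterion_add Mhat hm
  calc ‖fhat Mhat - f‖
      ≤ ‖fhat Mhat - fhat (min m Mhat)‖ + ‖fhat (min m Mhat) - fhat m‖ + ‖fhat m - g m‖ +
          ‖g m - f‖ := by
        have := norm_sub_le_norm_sub_add_norm_sub (fhat Mhat) (fhat (min m Mhat)) (fhat m)
        have := norm_sub_le_norm_sub_add_norm_sub (fhat Mhat) (fhat m) (g m)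
        have := norm_sub_le_norm_sub_add_norm_sub (fhat Mhat) (g m) f
        linarith
    _ ≤ 4 * (‖g m - f‖ + σ m) := by
        linarith [hvar m hm, hA m hm, hmin m hm, hσ m hm, hσ Mhat hMhat, norm_nonneg (g m - f)]

end GoldenshlugerLepski

theorem stmt0_general {H : Type*} [NormedAddCommGroup H] [InnerProductSpace ℝ H]
    (M' : Finset ℕ) (hM' : M'.Nonempty)
    (P : ℕ → Submodule ℝ H) [∀ m, Submodule.HasOrthogonalProjection (P m)]
    (hnested : ∀ m ∈ M', ∀ m' ∈ M', m ≤ m' → P m ≤ P m')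
    (fstar : H) (fhat : ℕ → H) (σ : ℕ → ℝ)
    (hσmono : ∀ m ∈ M', ∀ m' ∈ M', m ≤ m' → σ m ≤ σ m')
    (hvar : ∀ m ∈ M', ‖fhat m - (Submodule.orthogonalProjectionOnto (P m) fstar : H)‖ ≤ σ m / 2)
    (A : ℕ → ℝ)
    (hA : ∀ m, A m = M'.sup' hM' (fun m' => ‖fhat m' - fhat (min m m')‖ - σ m'))
    (Mhat : ℕ) (hMhat : Mhat ∈ M')
    (hmin : ∀ m ∈ M', A Mhat + 2 * σ Mhat ≤ A m + 2 * σ m) :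
    ‖fhat Mhat - fstar‖ ≤
      4 * M'.inf' hM' (fun m => ‖(Submodule.orthogonalProjectionOnto (P m) fstar : H) - fstar‖ + σ m) := by
  obtain rfl : A = glCriterion M' hM' fhat σ := funext hA
  obtain ⟨m, hm, hm_inf⟩ := M'.exists_mem_eq_inf' hM'
    fun m => ‖(Submodule.orthogonalProjectionOnto (P m) fstar : H) - fstar‖ + σ m
  rw [hm_inf]
  have hbias (k : ℕ) (hk : k ∈ M') :=
    glCriterion_le_norm_sub (hM' := hM') hσmono hvar (fun k hk m' hm' h =>
      Submodule.norm_orthogonalProjectionOnto_sub_le_of_le (hnested k hk m' hm' h) fstar) hk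
  exact norm_sub_le_of_glCriterion_minimizer hvar hbias hMhat hmin hm

/-- Oracle inequality for the Goldenshluger–Lepski-type state-by-state
selection procedure (Theorem 2 of the paper). -/
theorem stmt0 {H : Type*} [NormedAddCommGroup H] [InnerProductSpace ℝ H]
    (M' : Finset ℕ) (hM' : M'.Nonempty)
    (P : ℕ → Submodule ℝ H) [∀ m, Submodule.HasOrthogonalProjection (P m)]
    (hnested : ∀ m ∈ M', ∀ m' ∈ M', m ≤ m' → P m ≤ P m')
    (fstar : H) (fhat : ℕ → H) (σ : ℕ → ℝ)
    (hσnonneg : ∀ m ∈ M', 0 ≤ σ m)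
    (hσmono : ∀ m ∈ M', ∀ m' ∈ M', m ≤ m' → σ m ≤ σ m')
    (hmem : ∀ m ∈ M', fhat m ∈ P m)
    (hvar : ∀ m ∈ M', ‖fhat m - (Submodule.orthogonalProjectionOnto (P m) fstar : H)‖ ≤ σ m / 2)
    (A : ℕ → ℝ)
    (hA : ∀ m, A m = M'.sup' hM' (fun m' => ‖fhat m' - fhat (min m m')‖ - σ m'))
    (Mhat : ℕ) (hMhat : Mhat ∈ M')
    (hmin : ∀ m ∈ M', A Mhat + 2 * σ Mhat ≤ A m + 2 * σ m) :
    ‖fhat Mhat - fstar‖ ≤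
      4 * M'.inf' hM' (fun m => ‖(Submodule.orthogonalProjectionOnto (P m) fstar : H) - fstar‖ + σ m) :=
  stmt0_general M' hM' P hnested fstar fhat σ hσmono hvar A hA Mhat hMhat hmin
end

section
/- Let Π' = Diag(π') with all π'(k) > 0, Q' an invertible K×K matrix, and G a K×K symmetric positive definite Gram matrix with smallest eigenvalue σ_K(G). Let D₁ = (Π'Q')ᵀ G (Π'Q') and D₂ = Q'ᵀ G Q'. Then for any a = (a_1,…,a_K) ∈ H^K (H a real Hilbert space), ∑_{i,j=1}^K (D₁∘D₂)(i,j) ⟨a_i, a_j⟩ ≥ (min_k π'(k))² σ_K(Q')⁴ σ_K(G)² · ∑_{k=1}^K ‖a_k‖². -/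
/-!
In the Loewner order `λ_min(G) • 1 ≤ G`, `λ_min(Q'ᵀQ') • 1 ≤ Q'ᵀQ'` and `(min π')² • 1 ≤ Π'²`;
conjugating gives `c₁ • 1 ≤ D₁` and `c₂ • 1 ≤ D₂` with the constants of the claim. The Schur
product theorem makes `(D₁ - c₁ • 1) ∘ D₂` positive semidefinite, so
`D₁ ∘ D₂ ≥ c₁ • (1 ∘ D₂) = c₁ • diag(D₂) ≥ c₁ c₂ • 1`. Finally a matrix `M ≥ 0` gives a nonnegative
form `∑ᵢⱼ Mᵢⱼ ⟪aᵢ, aⱼ⟫` on `H^K`, because writing `M = BᵀB` turns it into `∑ₖ ‖∑ᵢ Bₖᵢ aᵢ‖²`.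
-/

open Matrix
open scoped RealInnerProductSpace MatrixOrder

namespace Matrix

theorem smul_one_le_diagonal {n : Type*} [DecidableEq n] {c : ℝ} {d : n → ℝ}
    (h : ∀ i, c ≤ d i) : c • (1 : Matrix n n ℝ) ≤ diagonal d := by
  rw [le_iff, smul_one_eq_diagonal, diagonal_sub, posSemidef_diagonal_iff]
  exact fun i => sub_nonneg.mpr (h i)

variable {n : Type*} [Fintype n] [DecidableEq n]

theorem IsHermitian.iInf_eigenvalues_smul_one_le {𝕜 : Type*} [RCLike 𝕜] {A : Matrix n n 𝕜}
    (hA : A.IsHermitian) : (⨅ i, hA.eigenvalues i) • (1 : Matrix n n 𝕜) ≤ A := by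
  rw [← Algebra.algebraMap_eq_smul_one]
  refine algebraMap_le_of_le_spectrum ?_ hA.isSelfAdjoint
  rw [hA.spectrum_real_eq_range_eigenvalues]
  rintro _ ⟨i, rfl⟩
  exact ciInf_le (Set.finite_range _).bddBelow i

theorem smul_one_le_transpose_mul_mul {G R : Matrix n n ℝ} {c γ : ℝ} (hc : 0 ≤ c)
    (hG : c • 1 ≤ G) (hR : γ • 1 ≤ Rᵀ * R) : (c * γ) • 1 ≤ Rᵀ * G * R := calc
  (c * γ) • (1 : Matrix n n ℝ) = c • (γ • 1) := mul_smul c γ 1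
  _ ≤ c • (Rᵀ * R) := smul_le_smul_of_nonneg_left hR hc
  _ = Rᵀ * (c • 1) * R := by rw [mul_smul_one, smul_mul]
  _ ≤ Rᵀ * G * R := by
    simpa only [star_eq_conjTranspose, conjTranspose_eq_transpose_of_trivial] using
      star_left_conjugate_le_conjugate hG R

theorem smul_one_le_hadamard {A B : Matrix n n ℝ} {c d : ℝ} (hc : 0 ≤ c) (hd : 0 ≤ d)
    (hA : c • 1 ≤ A) (hB : d • 1 ≤ B) : (c * d) • 1 ≤ A ⊙ B := by
  have hB0 : B.PosSemidef :=
    nonneg_iff_posSemidef.mp ((smul_nonneg hd zero_le_one).trans hB)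
  have hdiag : d • (1 : Matrix n n ℝ) ≤ diagonal B.diag := smul_one_le_diagonal fun i => by
    simpa using (le_iff.mp hB).diag_nonneg (i := i)
  have hsub : A ⊙ B - (c • 1) ⊙ B = (A - c • 1) ⊙ B := by
    ext i j
    simp only [sub_apply, hadamard_apply, sub_mul]
  calc (c * d) • (1 : Matrix n n ℝ) = c • (d • 1) := mul_smul c d 1
    _ ≤ c • diagonal B.diag := smul_le_smul_of_nonneg_left hdiag hc
    _ = (c • 1) ⊙ B := by rw [smul_hadamard, one_hadamard]
    _ ≤ A ⊙ B := by
      rw [le_iff, hsub]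
      exact (le_iff.mp hA).hadamard hB0

variable {H : Type*} [NormedAddCommGroup H] [InnerProductSpace ℝ H]

def innerForm (M : Matrix n n ℝ) (a : n → H) : ℝ := ∑ i, ∑ j, M i j * ⟪a i, a j⟫

omit [DecidableEq n] in
theorem innerForm_sub (M N : Matrix n n ℝ) (a : n → H) :
    innerForm (M - N) a = innerForm M a - innerForm N a := by
  simp only [innerForm, sub_apply, sub_mul, Finset.sum_sub_distrib]

theorem innerForm_smul_one (c : ℝ) (a : n → H) :
    innerForm (c • (1 : Matrix n n ℝ)) a = c * ∑ i, ‖a i‖ ^ 2 := by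
  simp [innerForm, one_apply, Finset.mul_sum]

omit [DecidableEq n] in
theorem innerForm_transpose_mul_self (B : Matrix n n ℝ) (a : n → H) :
    innerForm (Bᵀ * B) a = ∑ k, ‖∑ i, B k i • a i‖ ^ 2 := by
  simp only [innerForm, ← real_inner_self_eq_norm_sq, sum_inner, inner_sum, real_inner_smul_left,
    real_inner_smul_right, mul_apply, transpose_apply, Finset.sum_mul]
  refine (Finset.sum_congr rfl fun i _ => Finset.sum_comm).trans (Finset.sum_comm.trans ?_)
  refine Finset.sum_congr rfl fun k _ => Finset.sum_congr rfl fun i _ =>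
    Finset.sum_congr rfl fun j _ => ?_
  rw [real_inner_comm]
  ring

theorem PosSemidef.innerForm_nonneg {M : Matrix n n ℝ} (hM : M.PosSemidef) (a : n → H) :
    0 ≤ innerForm M a := by
  obtain ⟨B, rfl⟩ := CStarAlgebra.nonneg_iff_eq_star_mul_self.mp hM.nonneg
  rw [star_eq_conjTranspose, conjTranspose_eq_transpose_of_trivial, innerForm_transpose_mul_self]
  positivity

theorem innerForm_mono {M N : Matrix n n ℝ} (h : M ≤ N) (a : n → H) :
    innerForm M a ≤ innerForm N a :=
  sub_nonneg.mp (innerForm_sub N M a ▸ (le_iff.mp h).innerForm_nonneg a)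

theorem mul_sum_norm_sq_le_innerForm {M : Matrix n n ℝ} {c : ℝ} (h : c • 1 ≤ M) (a : n → H) :
    c * ∑ i, ‖a i‖ ^ 2 ≤ innerForm M a :=
  innerForm_smul_one (n := n) c a ▸ innerForm_mono h a

end Matrix

theorem stmt8_general {K : ℕ} {H : Type*} [NormedAddCommGroup H]
    [InnerProductSpace ℝ H]
    (π' : Fin K → ℝ) (hπ' : ∀ k, 0 < π' k)
    (Q' G : Matrix (Fin K) (Fin K) ℝ)
    (hG : G.PosDef) (hQQ : (Q'ᵀ * Q').IsHermitian)
    (a : Fin K → H) :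
    (⨅ k, π' k) ^ 2 * (⨅ i, hQQ.eigenvalues i) ^ 2 * (⨅ i, hG.1.eigenvalues i) ^ 2 *
        ∑ k, ‖a k‖ ^ 2 ≤
      ∑ i, ∑ j, (((Matrix.diagonal π' * Q')ᵀ * G * (Matrix.diagonal π' * Q')) i j *
        ((Q'ᵀ * G * Q') i j)) * ⟪a i, a j⟫ := by
  set m := ⨅ k, π' k
  set σQ := ⨅ i, hQQ.eigenvalues i
  set σG := ⨅ i, hG.1.eigenvalues i
  have hm : 0 ≤ m := Real.iInf_nonneg fun k => (hπ' k).le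
  have hσQ : 0 ≤ σQ := Real.iInf_nonneg (posSemidef_conjTranspose_mul_self Q').eigenvalues_nonneg
  have hσG : 0 ≤ σG := Real.iInf_nonneg hG.posSemidef.eigenvalues_nonneg
  have hGσ : σG • 1 ≤ G := hG.1.iInf_eigenvalues_smul_one_le
  have hQ : σQ • 1 ≤ Q'ᵀ * Q' := hQQ.iInf_eigenvalues_smul_one_le
  have hπQ : (m ^ 2 * σQ) • 1 ≤ (diagonal π' * Q')ᵀ * (diagonal π' * Q') := by
    have hπ : m ^ 2 • (1 : Matrix (Fin K) (Fin K) ℝ) ≤ diagonal fun k => π' k * π' k :=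
      smul_one_le_diagonal fun k => by
        nlinarith [ciInf_le (Set.finite_range π').bddBelow k, hπ' k]
    have hπQ_eq : (diagonal π' * Q')ᵀ * (diagonal π' * Q') =
        Q'ᵀ * (diagonal fun k => π' k * π' k) * Q' := by
      rw [transpose_mul, diagonal_transpose, ← diagonal_mul_diagonal]
      simp only [Matrix.mul_assoc]
    exact hπQ_eq ▸ smul_one_le_transpose_mul_mul (by positivity) hπ hQ
  have hD₁ := smul_one_le_transpose_mul_mul hσG hGσ hπQ
  have hD₂ := smul_one_le_transpose_mul_mul hσG hGσ hQ
  calc _ = σG * (m ^ 2 * σQ) * (σG * σQ) * ∑ k, ‖a k‖ ^ 2 := by ring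
    _ ≤ innerForm (_ ⊙ _) a := mul_sum_norm_sq_le_innerForm
        (smul_one_le_hadamard (by positivity) (by positivity) hD₁ hD₂) a

/-- Key inequality of the orthogonal-part step in the proof of Theorem 7:
for `D₁ = (Π'Q')ᵀ G (Π'Q')` and `D₂ = Q'ᵀ G Q'`,
`∑_{i,j} (D₁∘D₂)(i,j) ⟨a_i,a_j⟩ ≥ (min_k π'(k))² σ_K(Q')⁴ σ_K(G)² ∑_k ‖a_k‖²`,
where `σ_K(Q')⁴` is the square of the smallest eigenvalue of `Q'ᵀQ'`. -/
theorem stmt8 {K : ℕ} (hK : 0 < K) {H : Type*} [NormedAddCommGroup H]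
    [InnerProductSpace ℝ H]
    (π' : Fin K → ℝ) (hπ' : ∀ k, 0 < π' k)
    (Q' G : Matrix (Fin K) (Fin K) ℝ) (hQ'inv : IsUnit Q'.det)
    (hG : G.PosDef) (hQQ : (Q'ᵀ * Q').IsHermitian)
    (a : Fin K → H) :
    (⨅ k, π' k) ^ 2 * (⨅ i, hQQ.eigenvalues i) ^ 2 * (⨅ i, hG.1.eigenvalues i) ^ 2 *
        ∑ k, ‖a k‖ ^ 2 ≤
      ∑ i, ∑ j, (((Matrix.diagonal π' * Q')ᵀ * G * (Matrix.diagonal π' * Q')) i j *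
        ((Q'ᵀ * G * Q') i j)) * ⟪a i, a j⟫ :=
  stmt8_general π' hπ' Q' G hG hQQ a
end

section
/- Let H be a Hilbert space and f*₁,…,f*_K, f̂₁,…,f̂_K, g₁,…,g_K ∈ H (for K ≥ 1). Suppose there exist permutations τ, τ₀ of {1,…,K} with max_k ‖f̂_k − f*_{τ(k)}‖ ≤ s/2 and max_k ‖g_k − h_{τ₀(k)}‖ ≤ s₀/2, where h₁,…,h_K ∈ H satisfy max_k ‖f*_k − h_k‖ ≤ B. If s + s₀ + 2B < min_{k≠k'} ‖h_k − h_{k'}‖, then the permutation τ̂ minimizing max_k ‖f̂_{τ̂'(k)} − g_k‖ over permutations τ̂' equals τ^{-1}∘τ₀, and consequently max_k ‖f̂_{τ̂(k)} − f*_{τ₀(k)}‖ ≤ s/2. -/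
/-- Abstract version of Lemma 1 (alignment of estimators across models): under
the separation condition `s + s₀ + 2B < min_{k≠k'} ‖h_k − h_{k'}‖`, any
permutation minimizing `max_k ‖f̂_{τ̂(k)} − g_k‖` equals `τ⁻¹∘τ₀`, and the
aligned estimators satisfy the variance bound `max_k ‖f̂_{τ̂(k)} − f*_{τ₀(k)}‖ ≤ s/2`. -/
theorem stmt9 {H : Type*} [NormedAddCommGroup H] [InnerProductSpace ℝ H]
    {K : ℕ} (hK : 0 < K)
    (fstar fhat g hh : Fin K → H)
    (τ τ₀ : Equiv.Perm (Fin K)) (s s₀ B : ℝ)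
    (hfhat : ∀ k, ‖fhat k - fstar (τ k)‖ ≤ s / 2)
    (hg : ∀ k, ‖g k - hh (τ₀ k)‖ ≤ s₀ / 2)
    (hB : ∀ k, ‖fstar k - hh k‖ ≤ B)
    (hsep : ∀ k k', k ≠ k' → s + s₀ + 2 * B < ‖hh k - hh k'‖)
    (τhat : Equiv.Perm (Fin K))
    (hτhat : ∀ τ' : Equiv.Perm (Fin K),
      (⨆ k, ‖fhat (τhat k) - g k‖) ≤ ⨆ k, ‖fhat (τ' k) - g k‖) :
    (∀ k, τhat k = τ.symm (τ₀ k)) ∧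
      ∀ k, ‖fhat (τhat k) - fstar (τ₀ k)‖ ≤ s / 2 := by
  haveI : Nonempty (Fin K) := ⟨⟨0, hK⟩⟩
  set τ' : Equiv.Perm (Fin K) := τ₀.trans τ.symm with hτ'
  have hbnd2 : ∀ k, ‖fhat (τ' k) - fstar (τ₀ k)‖ ≤ s / 2 := by
    intro k
    have := hfhat (τ.symm (τ₀ k))
    simpa [hτ'] using this
  have hbound : ∀ k, ‖fhat (τ' k) - g k‖ ≤ s / 2 + B + s₀ / 2 := by
    intro k
    have h1 := hbnd2 k
    have h2 := hB (τ₀ k)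
    have h3 := hg k
    have tri : ‖fhat (τ' k) - g k‖ ≤ ‖fhat (τ' k) - fstar (τ₀ k)‖ +
        ‖fstar (τ₀ k) - hh (τ₀ k)‖ + ‖hh (τ₀ k) - g k‖ := by
      have := dist_triangle4 (fhat (τ' k)) (fstar (τ₀ k)) (hh (τ₀ k)) (g k)
      simpa [dist_eq_norm] using this
    have h3' : ‖hh (τ₀ k) - g k‖ ≤ s₀ / 2 := by
      rw [norm_sub_rev]; exact h3
    linarith
  have hsup : (⨆ k, ‖fhat (τhat k) - g k‖) ≤ s / 2 + B + s₀ / 2 :=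
    (hτhat τ').trans (ciSup_le hbound)
  have hpt : ∀ k, ‖fhat (τhat k) - g k‖ ≤ s / 2 + B + s₀ / 2 := by
    intro k
    refine le_trans ?_ hsup
    exact le_ciSup (f := fun k => ‖fhat (τhat k) - g k‖) (Set.Finite.bddAbove (Set.finite_range _)) k
  have heq : ∀ k, τhat k = τ.symm (τ₀ k) := by
    intro k
    by_contra hne
    have hne' : τ (τhat k) ≠ τ₀ k := by
      intro h
      exact hne (by rw [← h]; simp)
    have hlow := hsep _ _ hne'
    have t1 := hB (τ (τhat k))
    have t2 := hfhat (τhat k)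
    have t3 := hg k
    have t4 := hpt k
    have tri : ‖hh (τ (τhat k)) - hh (τ₀ k)‖ ≤ ‖hh (τ (τhat k)) - fstar (τ (τhat k))‖
        + ‖fstar (τ (τhat k)) - fhat (τhat k)‖ + ‖fhat (τhat k) - g k‖
        + ‖g k - hh (τ₀ k)‖ := by
      have h5 := dist_triangle4 (hh (τ (τhat k))) (fstar (τ (τhat k))) (fhat (τhat k)) (g k)
      have h6 := dist_triangle (hh (τ (τhat k))) (g k) (hh (τ₀ k))
      simp only [dist_eq_norm] at h5 h6
      linarith
    have t1' : ‖hh (τ (τhat k)) - fstar (τ (τhat k))‖ ≤ B := by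
      rw [norm_sub_rev]; exact t1
    have t2' : ‖fstar (τ (τhat k)) - fhat (τhat k)‖ ≤ s / 2 := by
      rw [norm_sub_rev]; exact t2
    linarith
  refine ⟨heq, fun k => ?_⟩
  rw [heq k]
  exact hbnd2 k
end
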